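/- Let p be monic of degree d, α ∈ ℂ, and p̃(z) = (z - α)p(z). If z_1,…,z_d ∈ ℂ \ {α} are such that the Jacobi Ehrlich–Aberth map JEA_p(z_1,…,z_d) is well defined, then JEA_{p̃}(z_1,…,z_d, α) is well defined and equals (JEA_p(z_1,…,z_d), α). In particular, the diagram with the embedding ι_α(z_1,…,z_d) = (z_1,…,z_d,α) commutes. -/
import Mathlib


open Polynomial
open Filter

/-- `q_i(x) = p(x)/∏_{j≠i}(x - v j)`. -/
noncomputable def eaQ (p : Polynomial ℂ) {n : ℕ} (v : Fin n → ℂ) (i : Fin n) : ℂ → ℂ :=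
  fun x => p.eval x / ∏ j ∈ Finset.univ.erase i, (x - v j)

/-- The Ehrlich–Aberth step (Newton step for `q_i`), with roots of `q_i` as fixed
points: `v i ↦ v i - q_i(v i)/q_i'(v i)`, and `v i` is kept when `q_i(v i) = 0`. -/
noncomputable def eaStep (p : Polynomial ℂ) {n : ℕ} (v : Fin n → ℂ) (i : Fin n) : ℂ :=
  if eaQ p v i (v i) = 0 then v i
  else v i - eaQ p v i (v i) / deriv (eaQ p v i) (v i)

/-- The Jacobi Ehrlich–Aberth map: all coordinates are updated simultaneously. -/
noncomputable def jea (p : Polynomial ℂ) {n : ℕ} (v : Fin n → ℂ) : Fin n → ℂ :=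
  fun i => eaStep p v i

/-- The Jacobi Ehrlich–Aberth map is well defined at `v`: the coordinates are
pairwise distinct, and each Ehrlich–Aberth step avoids division by zero. -/
def JeaWellDef (p : Polynomial ℂ) {n : ℕ} (v : Fin n → ℂ) : Prop :=
  Function.Injective v ∧ ∀ i, eaQ p v i (v i) = 0 ∨ deriv (eaQ p v i) (v i) ≠ 0

lemma erase_castSucc (d : ℕ) (i : Fin d) :
    (Finset.univ.erase i.castSucc : Finset (Fin (d+1))) =
    insert (Fin.last d) ((Finset.univ.erase i).image Fin.castSucc) := by
  ext j
  simp only [Finset.mem_erase, Finset.mem_univ, and_true, Finset.mem_insert,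
    Finset.mem_image, true_and]
  constructor
  · intro hj
    rcases Fin.eq_castSucc_or_eq_last j with ⟨k, rfl⟩ | rfl
    · exact Or.inr ⟨k, by simpa [Fin.castSucc_inj] using hj, rfl⟩
    · exact Or.inl rfl
  · rintro (rfl | ⟨k, hk, rfl⟩)
    · exact (Fin.castSucc_lt_last i).ne'
    · simpa [Fin.castSucc_inj] using hk

lemma eaQ_castSucc (p : Polynomial ℂ) (a : ℂ) {d : ℕ} (z : Fin d → ℂ) (i : Fin d)
    (x : ℂ) (hx : x ≠ a) :
    eaQ ((X - C a) * p) (Fin.snoc z a) i.castSucc x = eaQ p z i x := by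
  unfold eaQ
  rw [erase_castSucc, Finset.prod_insert (by simp only [Finset.mem_image]; rintro ⟨u, -, hu⟩; exact (Fin.castSucc_lt_last u).ne hu), Finset.prod_image
    (fun u _ v _ h => Fin.castSucc_injective _ h)]
  simp only [Fin.snoc_last, Fin.snoc_castSucc, eval_mul, eval_sub, eval_X, eval_C]
  exact mul_div_mul_left _ _ (sub_ne_zero.2 hx)

/-- Embedding into one degree higher: if `p` is monic of degree `d`,
`p̃ = (X - α) p`, and `z_1,…,z_d ∈ ℂ \ {α}` with `JEA_p(z)` well defined, then
`JEA_{p̃}(z, α)` is well defined and equals `(JEA_p(z), α)`. -/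
theorem stmt15 (d : ℕ) (p : Polynomial ℂ) (hp : p.Monic) (hdeg : p.natDegree = d)
    (a : ℂ) (z : Fin d → ℂ) (hza : ∀ i, z i ≠ a) (hwd : JeaWellDef p z) :
    JeaWellDef ((X - C a) * p) (Fin.snoc z a) ∧
      jea ((X - C a) * p) (Fin.snoc z a) = Fin.snoc (jea p z) a := by
  obtain ⟨hinj, hstep⟩ := hwd
  have key : ∀ i : Fin d,
      eaQ ((X - C a) * p) (Fin.snoc z a) i.castSucc =ᶠ[nhds (z i)] eaQ p z i := by
    intro i
    filter_upwards [eventually_ne_nhds (hza i)] with x hx using eaQ_castSucc p a z i x hx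
  have hval : ∀ i : Fin d,
      eaQ ((X - C a) * p) (Fin.snoc z a) i.castSucc (z i) = eaQ p z i (z i) :=
    fun i => eaQ_castSucc p a z i _ (hza i)
  have hderiv : ∀ i : Fin d,
      deriv (eaQ ((X - C a) * p) (Fin.snoc z a) i.castSucc) (z i) = deriv (eaQ p z i) (z i) :=
    fun i => (key i).deriv_eq
  have hlastQ : eaQ ((X - C a) * p) (Fin.snoc z a) (Fin.last d) a = 0 := by
    simp [eaQ]
  have hinj' : Function.Injective (Fin.snoc z a : Fin (d+1) → ℂ) := by
    intro j k h
    rcases Fin.eq_castSucc_or_eq_last j with ⟨j', rfl⟩ | rfl <;>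
      rcases Fin.eq_castSucc_or_eq_last k with ⟨k', rfl⟩ | rfl <;>
      simp only [Fin.snoc_castSucc, Fin.snoc_last] at h
    · exact congrArg Fin.castSucc (hinj h)
    · exact absurd h (hza j')
    · exact absurd h.symm (hza k')
    · rfl
  refine ⟨⟨hinj', fun i => ?_⟩, funext fun i => ?_⟩
  · rcases Fin.eq_castSucc_or_eq_last i with ⟨i', rfl⟩ | rfl
    · rw [show (Fin.snoc z a : Fin (d+1) → ℂ) i'.castSucc = z i' from Fin.snoc_castSucc .., 
        hval, hderiv]
      exact hstep i'
    · left
      rw [show (Fin.snoc z a : Fin (d+1) → ℂ) (Fin.last d) = a from Fin.snoc_last ..]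
      exact hlastQ
  · rcases Fin.eq_castSucc_or_eq_last i with ⟨i', rfl⟩ | rfl
    · simp only [jea, eaStep, Fin.snoc_castSucc, hval i', hderiv i']
    · simp [jea, eaStep, Fin.snoc_last, hlastQ]
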